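/- Let γ be a proper player-1 selector, let v = ⟨1⟩val^{γ̄}(Reach(T)), let I = {s ∈ S ∖ (T ∪ W₂) | Pre₁(v)(s) > v(s)}, and let γ' be a player-1 selector that agrees with γ at all states not in I and satisfies Pre_{1:γ'}(v)(s) = Pre₁(v)(s) > v(s) for all s ∈ I. Let v' = ⟨1⟩val^{γ̄'}(Reach(T)). Then v'(s) ≥ Pre₁(v)(s) for all states s; consequently v'(s) ≥ v(s) for all states s, and v'(s) > v(s) for all s ∈ I. -/

import Mathlib

open scoped Classical

/-- A (two-player) concurrent game structure: a finite state space `S`, a finite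
set `M` of moves, move assignments `Γ₁ Γ₂ : S → Finset M`, and a probabilistic
transition function `δ`. -/
structure CGame (S : Type) (M : Type) where
  Γ₁ : S → Finset M
  Γ₂ : S → Finset M
  δ : S → M → M → S → ℝ

namespace CGame

variable {S M : Type} [Fintype S] [DecidableEq S] [Fintype M] [DecidableEq M]

/-- Well-formedness of a concurrent game structure: move sets are nonempty and
`δ s a b` is a probability distribution over states. -/
def IsGame (G : CGame S M) : Prop :=
  (∀ s, (G.Γ₁ s).Nonempty) ∧ (∀ s, (G.Γ₂ s).Nonempty) ∧
    (∀ s a b t, 0 ≤ G.δ s a b t) ∧ (∀ s a b, (∑ t, G.δ s a b t) = 1)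

/-- `x : M → ℝ` is a probability distribution supported on `A`. -/
def IsDistOn (A : Finset M) (x : M → ℝ) : Prop :=
  (∀ a, 0 ≤ x a) ∧ (∀ a, x a ≠ 0 → a ∈ A) ∧ (∑ a, x a) = 1

/-- A selector for player 1. -/
def IsSel1 (G : CGame S M) (ξ : S → M → ℝ) : Prop := ∀ s, IsDistOn (G.Γ₁ s) (ξ s)

/-- A selector for player 2. -/
def IsSel2 (G : CGame S M) (ξ : S → M → ℝ) : Prop := ∀ s, IsDistOn (G.Γ₂ s) (ξ s)

/-- A strategy for player 1: maps a history (past states `w` and current state `s`)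
to a distribution over the moves available at `s`. -/
def IsStrat1 (G : CGame S M) (σ : List S → S → M → ℝ) : Prop :=
  ∀ w s, IsDistOn (G.Γ₁ s) (σ w s)

/-- A strategy for player 2. -/
def IsStrat2 (G : CGame S M) (σ : List S → S → M → ℝ) : Prop :=
  ∀ w s, IsDistOn (G.Γ₂ s) (σ w s)

/-- The memoryless strategy induced by a selector. -/
def ml (ξ : S → M → ℝ) : List S → S → M → ℝ := fun _ s => ξ s

/-- The pure (Dirac) distribution on a move `b`. -/
def pureDist (b : M) : M → ℝ := fun b' => if b' = b then 1 else 0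

/-- The player-1 selector choosing all available moves uniformly at random. -/
noncomputable def uniformSel (G : CGame S M) : S → M → ℝ :=
  fun s a => if a ∈ G.Γ₁ s then (1 : ℝ) / (G.Γ₁ s).card else 0

/-- Probability of reaching `T` within `n` steps, starting from history `w`
and current state `s`, under strategies `σ₁, σ₂`. -/
noncomputable def reachW (G : CGame S M) (σ₁ σ₂ : List S → S → M → ℝ) (T : Set S) :
    ℕ → List S → S → ℝ
  | 0, _, s => if s ∈ T then 1 else 0
  | n + 1, w, s =>
      if s ∈ T then 1
      else ∑ a : M, ∑ b : M, ∑ t : S,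
        σ₁ w s a * σ₂ w s b * G.δ s a b t * reachW G σ₁ σ₂ T n (w ++ [s]) t

/-- Probability of staying in `F` for `n` steps, starting from history `w`
and current state `s`, under strategies `σ₁, σ₂`. -/
noncomputable def safeW (G : CGame S M) (σ₁ σ₂ : List S → S → M → ℝ) (F : Set S) :
    ℕ → List S → S → ℝ
  | 0, _, s => if s ∈ F then 1 else 0
  | n + 1, w, s =>
      if s ∈ F then
        ∑ a : M, ∑ b : M, ∑ t : S,
          σ₁ w s a * σ₂ w s b * G.δ s a b t * safeW G σ₁ σ₂ F n (w ++ [s]) t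
      else 0

/-- `Pr_s^{σ₁,σ₂}(Reach T)`: probability of eventually reaching `T` from `s`. -/
noncomputable def prReach (G : CGame S M) (σ₁ σ₂ : List S → S → M → ℝ) (T : Set S)
    (s : S) : ℝ :=
  ⨆ n : ℕ, reachW G σ₁ σ₂ T n [] s

/-- `Pr_s^{σ₁,σ₂}(Safe F)`: probability that the play stays in `F` forever. -/
noncomputable def prSafe (G : CGame S M) (σ₁ σ₂ : List S → S → M → ℝ) (F : Set S)
    (s : S) : ℝ :=
  ⨅ n : ℕ, safeW G σ₁ σ₂ F n [] s

/-- `⟨1⟩val^{σ₁}(Reach T)(s) = inf_{σ₂} Pr_s^{σ₁,σ₂}(Reach T)`. -/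
noncomputable def valReachUnder (G : CGame S M) (σ₁ : List S → S → M → ℝ) (T : Set S)
    (s : S) : ℝ :=
  ⨅ σ₂ : {σ // IsStrat2 G σ}, prReach G σ₁ σ₂.1 T s

/-- `⟨1⟩val(Reach T)(s) = sup_{σ₁} inf_{σ₂} Pr_s^{σ₁,σ₂}(Reach T)`. -/
noncomputable def valReach (G : CGame S M) (T : Set S) (s : S) : ℝ :=
  ⨆ σ₁ : {σ // IsStrat1 G σ}, valReachUnder G σ₁.1 T s

/-- `⟨1⟩val^{σ₁}(Safe F)(s) = inf_{σ₂} Pr_s^{σ₁,σ₂}(Safe F)`. -/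
noncomputable def valSafeUnder (G : CGame S M) (σ₁ : List S → S → M → ℝ) (F : Set S)
    (s : S) : ℝ :=
  ⨅ σ₂ : {σ // IsStrat2 G σ}, prSafe G σ₁ σ₂.1 F s

/-- `⟨1⟩val(Safe F)(s) = sup_{σ₁} inf_{σ₂} Pr_s^{σ₁,σ₂}(Safe F)`. -/
noncomputable def valSafe (G : CGame S M) (F : Set S) (s : S) : ℝ :=
  ⨆ σ₁ : {σ // IsStrat1 G σ}, valSafeUnder G σ₁.1 F s

/-- `W₂ = {s | ⟨1⟩val(Reach T)(s) = 0}`. -/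
noncomputable def W2 (G : CGame S M) (T : Set S) : Set S := {s | valReach G T s = 0}

/-- `W₁ = {s | ⟨1⟩val(Safe F)(s) = 1}`. -/
noncomputable def W1 (G : CGame S M) (F : Set S) : Set S := {s | valSafe G F s = 1}

/-- A state is absorbing if for all moves the successor is the state itself. -/
def Absorbing (G : CGame S M) (s : S) : Prop := ∀ a b, G.δ s a b s = 1

/-- A player-1 strategy is proper if against every player-2 strategy, from every
state the set `T ∪ W₂` is reached with probability 1. -/
noncomputable def Proper (G : CGame S M) (T : Set S) (σ₁ : List S → S → M → ℝ) : Prop :=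
  ∀ σ₂, IsStrat2 G σ₂ → ∀ s, prReach G σ₁ σ₂ (T ∪ W2 G T) s = 1

/-- `Pre_{ξ₁,ξ₂}(v)(s)`: one-step expectation of `v` at `s` when the players use the
one-state selectors `x, y`. -/
noncomputable def preSS (G : CGame S M) (v : S → ℝ) (s : S) (x y : M → ℝ) : ℝ :=
  ∑ a : M, ∑ b : M, ∑ t : S, v t * G.δ s a b t * x a * y b

/-- `Pre_{1:ξ₁}(v)(s) = inf_{ξ₂} Pre_{ξ₁,ξ₂}(v)(s)`. -/
noncomputable def pre1Sel (G : CGame S M) (v : S → ℝ) (s : S) (x : M → ℝ) : ℝ :=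
  ⨅ y : {y : M → ℝ // IsDistOn (G.Γ₂ s) y}, preSS G v s x y.1

/-- `Pre₁(v)(s) = sup_{ξ₁} inf_{ξ₂} Pre_{ξ₁,ξ₂}(v)(s)`. -/
noncomputable def pre1 (G : CGame S M) (v : S → ℝ) (s : S) : ℝ :=
  ⨆ x : {x : M → ℝ // IsDistOn (G.Γ₁ s) x}, pre1Sel G v s x.1

/-- The value-iteration sequence: `u 0 = [T]`, `u (k+1) = Pre₁ (u k)`. -/
noncomputable def valIter (G : CGame S M) (T : Set S) : ℕ → S → ℝ
  | 0 => fun s => if s ∈ T then 1 else 0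
  | n + 1 => fun s => pre1 G (valIter G T n) s

/-- The entry time `ℓ_k(s) = min {j ≤ k | u_j(s) = u_k(s)}`. -/
noncomputable def entryTime (G : CGame S M) (T : Set S) (k : ℕ) (s : S) : ℕ :=
  sInf {j : ℕ | valIter G T j s = valIter G T k s}

/-- `dest(s,b)` under a player-1 selector `η`: possible successors of `s` when
player 1 plays `η` and player 2 plays `b`. -/
def destSet (G : CGame S M) (η : S → M → ℝ) (s : S) (b : M) : Set S :=
  {t | ∃ a, η s a ≠ 0 ∧ G.δ s a b t ≠ 0}

/-- `OptSel(v,s)`: the set of optimal one-state player-1 selectors for `v` at `s`. -/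
noncomputable def OptSel (G : CGame S M) (v : S → ℝ) (s : S) : Set (M → ℝ) :=
  {x | IsDistOn (G.Γ₁ s) x ∧ pre1Sel G v s x = pre1 G v s}

/-- `CountOpt(v,s,x)`: the set of counter-optimal player-2 moves against `x`. -/
noncomputable def countOpt (G : CGame S M) (v : S → ℝ) (s : S) (x : M → ℝ) : Finset M :=
  (G.Γ₂ s).filter fun b => preSS G v s x (pureDist b) = pre1 G v s

/-- The support of a one-state selector, as a `Finset`. -/
noncomputable def fsupp (x : M → ℝ) : Finset M := Finset.univ.filter fun a => x a ≠ 0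

/-- `OptSelCount(v,s)`: pairs `(A,B)` such that some optimal selector has support `A`
and counter-optimal action set `B`. -/
noncomputable def optSelCount (G : CGame S M) (v : S → ℝ) (s : S) :
    Set (Finset M × Finset M) :=
  {p | ∃ x ∈ OptSel G v s, fsupp x = p.1 ∧ countOpt G v s x = p.2}

/-- A selector is `k`-uniform if every probability it assigns is of the form `i/j`
with `0 ≤ i ≤ j ≤ k`. -/
def KUniform (k : ℕ) (ξ : S → M → ℝ) : Prop :=
  ∀ s a, ∃ i j : ℕ, i ≤ j ∧ j ≤ k ∧ ξ s a = (i : ℝ) / (j : ℝ)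

end CGame

/-!
Write `v` for the value of `γ̄`. Against a memoryless strategy player 2 may deviate for one round
and then continue near-optimally, so `v ≤ Pre_{γ,y}(v)` for every `y`. Hence `u = Pre₁(v) ≥ v`,
and by the choice of `γ'` on `I` (and `γ' = γ` elsewhere) `u ≤ Pre_{γ',y}(u)` outside `T ∪ W₂`.
Such a `u` is bounded by the probability of reaching `T` within `n` rounds plus the probability of
still being outside `T ∪ W₂`, so it remains to see that the latter vanishes under `γ̄'`.

Its worst case over all player-2 strategies is computed by backward induction over pure moves, and
the limit `z` is a post-fixpoint realised by a pure player-2 selector `ζ`. If `z` were positive, its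
maximisers would form a set outside `T ∪ W₂` closed under `γ'` and `ζ`. On the maximisers of `v` in
that set `v` is harmonic for `γ'`, so they avoid `I`, where `v` increases strictly; there `γ' = γ`,
so they form a closed set under `γ` and `ζ` that never reaches `T ∪ W₂`, contradicting properness.
-/

namespace CGame

open Filter Topology

variable {S M : Type} [Fintype M] {G : CGame S M}

lemma isDistOn_pureDist [DecidableEq M] {A : Finset M} {b : M} (hb : b ∈ A) :
    IsDistOn A (pureDist b) := by
  refine ⟨fun a => ?_, fun a ha => ?_, by simp [pureDist]⟩
  · unfold pureDist; split_ifs <;> norm_num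
  · unfold pureDist at ha
    split_ifs at ha with h
    · exact h ▸ hb
    · exact absurd rfl ha

lemma nonempty_isDistOn {A : Finset M} (hA : A.Nonempty) :
    Nonempty {x : M → ℝ // IsDistOn A x} :=
  ⟨⟨pureDist hA.choose, isDistOn_pureDist hA.choose_spec⟩⟩

section PlayThen

/-- Play `y` in the first round if the play starts at `s`; from the state `t` reached after the
first round, continue with `σ t` as if the play had started at `t`. -/
noncomputable def playThen (s : S) (y : M → ℝ) (σ : S → List S → S → M → ℝ) : List S → S → M → ℝ
  | [], t => if t = s then y else σ t [] t
  | _ :: w, t => σ (w.headD t) w t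

variable {s : S} {y : M → ℝ} {σ : S → List S → S → M → ℝ}

lemma isStrat2_playThen (hy : IsDistOn (G.Γ₂ s) y) (hσ : ∀ t, IsStrat2 G (σ t)) :
    IsStrat2 G (playThen s y σ)
  | [], t => by
    change IsDistOn _ (if t = s then y else σ t [] t)
    split_ifs with h
    · exact h ▸ hy
    · exact hσ t [] t
  | _ :: w, t => hσ _ w t

end PlayThen

variable [Fintype S]

lemma nonempty_isStrat2 (hG : G.IsGame) : Nonempty {σ // IsStrat2 G σ} :=
  ⟨⟨fun _ s => (nonempty_isDistOn (hG.2.1 s)).some.1,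
    fun _ s => (nonempty_isDistOn (hG.2.1 s)).some.2⟩⟩

section OneStep

variable {s : S} {x y : M → ℝ}

lemma preSS_mono (hG : G.IsGame) (hx : ∀ a, 0 ≤ x a) (hy : ∀ b, 0 ≤ y b) {f g : S → ℝ}
    (hfg : ∀ t, f t ≤ g t) : preSS G f s x y ≤ preSS G g s x y :=
  Finset.sum_le_sum fun a _ => Finset.sum_le_sum fun b _ => Finset.sum_le_sum fun t _ => by
    have := hG.2.2.1 s a b t; have := hx a; have := hy b; have := hfg t
    gcongr

lemma preSS_nonneg (hG : G.IsGame) (hx : ∀ a, 0 ≤ x a) (hy : ∀ b, 0 ≤ y b) {f : S → ℝ}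
    (hf : ∀ t, 0 ≤ f t) : 0 ≤ preSS G f s x y :=
  Finset.sum_nonneg fun a _ => Finset.sum_nonneg fun b _ => Finset.sum_nonneg fun t _ => by
    have := hG.2.2.1 s a b t; have := hx a; have := hy b; have := hf t
    positivity

lemma preSS_const (hG : G.IsGame) {A B : Finset M} (hx : IsDistOn A x) (hy : IsDistOn B y)
    (c : ℝ) : preSS G (fun _ => c) s x y = c := by
  simp only [preSS, ← Finset.sum_mul, ← Finset.mul_sum, hG.2.2.2, mul_one, hx.2.2, hy.2.2]

lemma preSS_add (f g : S → ℝ) :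
    preSS G (fun t => f t + g t) s x y = preSS G f s x y + preSS G g s x y := by
  simp only [preSS, add_mul, Finset.sum_add_distrib]

lemma preSS_sub (f g : S → ℝ) :
    preSS G (fun t => f t - g t) s x y = preSS G f s x y - preSS G g s x y := by
  simp only [preSS, sub_mul, Finset.sum_sub_distrib]

lemma preSS_le_const (hG : G.IsGame) {A B : Finset M} (hx : IsDistOn A x) (hy : IsDistOn B y)
    {f : S → ℝ} {c : ℝ} (hf : ∀ t, f t ≤ c) : preSS G f s x y ≤ c :=
  (preSS_mono hG hx.1 hy.1 hf).trans_eq (preSS_const hG hx hy c)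

lemma preSS_eq_sum_pureDist [DecidableEq M] (f : S → ℝ) :
    preSS G f s x y = ∑ b, y b * preSS G f s x (pureDist b) := by
  simp only [preSS, pureDist, mul_ite, mul_one, mul_zero, Finset.sum_ite_irrel,
    Finset.sum_const_zero, Finset.sum_ite_eq', Finset.mem_univ, if_true, Finset.mul_sum]
  rw [Finset.sum_comm]
  exact Finset.sum_congr rfl fun b _ => Finset.sum_congr rfl fun a _ =>
    Finset.sum_congr rfl fun t _ => by ring

lemma preSS_le_of_pureDist_le [DecidableEq M] {B : Finset M} (hy : IsDistOn B y) {f : S → ℝ} {c : ℝ}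
    (h : ∀ b ∈ B, preSS G f s x (pureDist b) ≤ c) : preSS G f s x y ≤ c := by
  rw [preSS_eq_sum_pureDist, ← one_mul c, ← hy.2.2, Finset.sum_mul]
  refine Finset.sum_le_sum fun b _ => ?_
  by_cases hb : y b = 0
  · simp [hb]
  · exact mul_le_mul_of_nonneg_left (h b (hy.2.1 b hb)) (hy.1 b)

lemma continuous_preSS : Continuous fun f : S → ℝ => preSS G f s x y := by
  unfold preSS; fun_prop

lemma preSS_absorbing (hG : G.IsGame) (habs : Absorbing G s) {A B : Finset M}
    (hx : IsDistOn A x) (hy : IsDistOn B y) (f : S → ℝ) : preSS G f s x y = f s := by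
  have hδ : ∀ a b t, t ≠ s → G.δ s a b t = 0 := by
    intro a b t ht
    have hsum := hG.2.2.2 s a b
    rw [← Finset.add_sum_erase _ _ (Finset.mem_univ s), habs a b, add_eq_left,
      Finset.sum_eq_zero_iff_of_nonneg fun t _ => hG.2.2.1 s a b t] at hsum
    exact hsum t (Finset.mem_erase.2 ⟨ht, Finset.mem_univ t⟩)
  rw [← preSS_const hG hx hy (f s)]
  refine Finset.sum_congr rfl fun a _ => Finset.sum_congr rfl fun b _ =>
    Finset.sum_congr rfl fun t _ => ?_
  by_cases ht : t = s
  · rw [ht]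
  · simp [hδ a b t ht]

variable {ξ : S → M → ℝ} {f : S → ℝ}

lemma preSS_eq_zero_of_destSet (hf : ∀ b, y b ≠ 0 → ∀ t ∈ destSet G ξ s b, f t = 0) :
    preSS G f s (ξ s) y = 0 :=
  Finset.sum_eq_zero fun a _ => Finset.sum_eq_zero fun b _ => Finset.sum_eq_zero fun t _ => by
    by_cases hxa : ξ s a = 0
    · simp [hxa]
    by_cases hyb : y b = 0
    · simp [hyb]
    by_cases hδ : G.δ s a b t = 0
    · simp [hδ]
    simp [hf b hyb t ⟨a, hxa, hδ⟩]

lemma preSS_le_of_destSet_le (hG : G.IsGame) (hξ : IsDistOn (G.Γ₁ s) (ξ s))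
    (hy : IsDistOn (G.Γ₂ s) y) {m : ℝ} (hf : ∀ b, y b ≠ 0 → ∀ t ∈ destSet G ξ s b, f t ≤ m) :
    preSS G f s (ξ s) y ≤ m ∧
      (m ≤ preSS G f s (ξ s) y → ∀ b, y b ≠ 0 → ∀ t ∈ destSet G ξ s b, f t = m) := by
  have hterm : ∀ a b t, 0 ≤ (m - f t) * G.δ s a b t * ξ s a * y b := by
    intro a b t
    by_cases hxa : ξ s a = 0
    · simp [hxa]
    by_cases hyb : y b = 0
    · simp [hyb]
    by_cases hδ : G.δ s a b t = 0
    · simp [hδ]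
    have := hf b hyb t ⟨a, hxa, hδ⟩; have := hG.2.2.1 s a b t; have := hξ.1 a; have := hy.1 b
    have : 0 ≤ m - f t := by linarith
    positivity
  have hgap : preSS G (fun t => m - f t) s (ξ s) y = m - preSS G f s (ξ s) y := by
    rw [preSS_sub, preSS_const hG hξ hy]
  have hsum : 0 ≤ preSS G (fun t => m - f t) s (ξ s) y :=
    Finset.sum_nonneg fun a _ => Finset.sum_nonneg fun b _ => Finset.sum_nonneg fun t _ =>
      hterm a b t
  refine ⟨by linarith, fun hm b hb t ⟨a, ha, hδ⟩ => ?_⟩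
  have hsingle : (m - f t) * G.δ s a b t * ξ s a * y b ≤ preSS G (fun t => m - f t) s (ξ s) y :=
    (Finset.single_le_sum (fun t _ => hterm a b t) (Finset.mem_univ t)).trans <|
      (Finset.single_le_sum (f := fun b => ∑ t, (m - f t) * G.δ s a b t * ξ s a * y b)
        (fun b _ => Finset.sum_nonneg fun t _ => hterm a b t) (Finset.mem_univ b)).trans <|
      Finset.single_le_sum (f := fun a => ∑ b, ∑ t, (m - f t) * G.δ s a b t * ξ s a * y b)
        (fun a _ => Finset.sum_nonneg fun b _ => Finset.sum_nonneg fun t _ => hterm a b t)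
        (Finset.mem_univ a)
  have hzero := le_antisymm (by linarith) (hterm a b t)
  simp only [mul_eq_zero, ha, hδ, hb, or_false] at hzero
  linarith

end OneStep

section Plays

variable {σ₁ σ₂ : List S → S → M → ℝ} {T : Set S}

lemma reachW_succ (n : ℕ) (w : List S) (s : S) :
    reachW G σ₁ σ₂ T (n + 1) w s =
      if s ∈ T then 1 else preSS G (reachW G σ₁ σ₂ T n (w ++ [s])) s (σ₁ w s) (σ₂ w s) := by
  rw [reachW, preSS]
  congr 1
  exact Finset.sum_congr rfl fun a _ => Finset.sum_congr rfl fun b _ =>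
    Finset.sum_congr rfl fun t _ => by ring

lemma safeW_succ (n : ℕ) (w : List S) (s : S) :
    safeW G σ₁ σ₂ T (n + 1) w s =
      if s ∈ T then preSS G (safeW G σ₁ σ₂ T n (w ++ [s])) s (σ₁ w s) (σ₂ w s) else 0 := by
  rw [safeW, preSS]
  congr 1
  exact Finset.sum_congr rfl fun a _ => Finset.sum_congr rfl fun b _ =>
    Finset.sum_congr rfl fun t _ => by ring

lemma reachW_nonneg (hG : G.IsGame) (h₁ : IsStrat1 G σ₁) (h₂ : IsStrat2 G σ₂) (n : ℕ) :
    ∀ w s, 0 ≤ reachW G σ₁ σ₂ T n w s := by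
  induction n with
  | zero => intro w s; rw [reachW]; split_ifs <;> norm_num
  | succ n ih =>
    intro w s; rw [reachW_succ]; split_ifs
    · norm_num
    · exact preSS_nonneg hG (h₁ w s).1 (h₂ w s).1 fun t => ih _ t

lemma reachW_le_one (hG : G.IsGame) (h₁ : IsStrat1 G σ₁) (h₂ : IsStrat2 G σ₂) (n : ℕ) :
    ∀ w s, reachW G σ₁ σ₂ T n w s ≤ 1 := by
  induction n with
  | zero => intro w s; rw [reachW]; split_ifs <;> norm_num
  | succ n ih =>
    intro w s; rw [reachW_succ]; split_ifs
    · norm_num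
    · exact preSS_le_const hG (h₁ w s) (h₂ w s) fun t => ih _ t

lemma safeW_nonneg (hG : G.IsGame) (h₁ : IsStrat1 G σ₁) (h₂ : IsStrat2 G σ₂) (n : ℕ) :
    ∀ w s, 0 ≤ safeW G σ₁ σ₂ T n w s := by
  induction n with
  | zero => intro w s; rw [safeW]; split_ifs <;> norm_num
  | succ n ih =>
    intro w s; rw [safeW_succ]; split_ifs
    · exact preSS_nonneg hG (h₁ w s).1 (h₂ w s).1 fun t => ih _ t
    · norm_num

lemma reachW_le_prReach (hG : G.IsGame) (h₁ : IsStrat1 G σ₁) (h₂ : IsStrat2 G σ₂) (n : ℕ)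
    (s : S) : reachW G σ₁ σ₂ T n [] s ≤ prReach G σ₁ σ₂ T s :=
  le_ciSup ⟨1, Set.forall_mem_range.2 fun n => reachW_le_one hG h₁ h₂ n [] s⟩ n

lemma prReach_nonneg (hG : G.IsGame) (h₁ : IsStrat1 G σ₁) (h₂ : IsStrat2 G σ₂) (s : S) :
    0 ≤ prReach G σ₁ σ₂ T s :=
  (reachW_nonneg hG h₁ h₂ 0 [] s).trans (reachW_le_prReach hG h₁ h₂ 0 s)

lemma prReach_le_one (hG : G.IsGame) (h₁ : IsStrat1 G σ₁) (h₂ : IsStrat2 G σ₂) (s : S) :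
    prReach G σ₁ σ₂ T s ≤ 1 :=
  ciSup_le fun n => reachW_le_one hG h₁ h₂ n [] s

lemma valReachUnder_le_prReach (hG : G.IsGame) (h₁ : IsStrat1 G σ₁) (h₂ : IsStrat2 G σ₂)
    (s : S) : valReachUnder G σ₁ T s ≤ prReach G σ₁ σ₂ T s :=
  ciInf_le (f := fun σ : {σ // IsStrat2 G σ} => prReach G σ₁ σ.1 T s)
    ⟨0, Set.forall_mem_range.2 fun σ => prReach_nonneg hG h₁ σ.2 s⟩ ⟨σ₂, h₂⟩

lemma valReachUnder_nonneg (hG : G.IsGame) (h₁ : IsStrat1 G σ₁) (s : S) :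
    0 ≤ valReachUnder G σ₁ T s :=
  have := nonempty_isStrat2 hG
  le_ciInf fun σ => prReach_nonneg hG h₁ σ.2 s

lemma valReachUnder_le_one (hG : G.IsGame) (h₁ : IsStrat1 G σ₁) (s : S) :
    valReachUnder G σ₁ T s ≤ 1 :=
  have σ := (nonempty_isStrat2 hG).some
  (valReachUnder_le_prReach hG h₁ σ.2 s).trans (prReach_le_one hG h₁ σ.2 s)

lemma valReachUnder_eq_zero_of_mem_W2 (hG : G.IsGame) (h₁ : IsStrat1 G σ₁) {s : S}
    (hs : s ∈ W2 G T) : valReachUnder G σ₁ T s = 0 :=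
  le_antisymm
    ((le_ciSup (f := fun σ : {σ // IsStrat1 G σ} => valReachUnder G σ.1 T s)
      ⟨1, Set.forall_mem_range.2 fun σ => valReachUnder_le_one hG σ.2 s⟩ ⟨σ₁, h₁⟩).trans_eq hs)
    (valReachUnder_nonneg hG h₁ s)

end Plays

section SubFixpoint

variable {s : S} {y : M → ℝ} {σ : S → List S → S → M → ℝ} {T : Set S}

lemma reachW_playThen (γ : S → M → ℝ) (s₀ : S) (n : ℕ) :
    ∀ w t, reachW G (ml γ) (playThen s y σ) T n (s₀ :: w) t =
      reachW G (ml γ) (σ (w.headD t)) T n w t := by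
  induction n with
  | zero => intro w t; simp only [reachW]
  | succ n ih =>
    intro w t
    rw [reachW_succ, reachW_succ]
    congr 1
    have hnext : reachW G (ml γ) (playThen s y σ) T n (s₀ :: (w ++ [t])) =
        reachW G (ml γ) (σ (w.headD t)) T n (w ++ [t]) :=
      funext fun r => (ih _ r).trans (by cases w <;> rfl)
    rw [List.cons_append, hnext]
    rfl

/-- Player 2 may play `y` first and then near-optimally from the successor; since `ml γ` ignores
the history, the continuation faces the same strategy as a play started there. -/
lemma valReachUnder_le_preSS (hG : G.IsGame) {γ : S → M → ℝ} (hγ : IsSel1 G γ)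
    (hT : ∀ t ∈ T, Absorbing G t) (hy : IsDistOn (G.Γ₂ s) y) :
    valReachUnder G (ml γ) T s ≤ preSS G (valReachUnder G (ml γ) T) s (γ s) y := by
  by_cases hsT : s ∈ T
  · rw [preSS_absorbing hG (hT s hsT) (hγ s) hy]
  set v := valReachUnder G (ml γ) T
  have h₁ : IsStrat1 G (ml γ) := fun _ => hγ
  have := nonempty_isStrat2 hG
  refine le_of_forall_pos_le_add fun ε hε => ?_
  have hnear : ∀ t, ∃ σ : {σ // IsStrat2 G σ}, prReach G (ml γ) σ.1 T t < v t + ε :=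
    fun t => exists_lt_of_ciInf_lt (lt_add_of_pos_right _ hε)
  choose σ hσ using hnear
  have hstrat := isStrat2_playThen hy fun t => (σ t).2
  refine (valReachUnder_le_prReach hG h₁ hstrat s).trans (ciSup_le fun n => ?_)
  cases n with
  | zero =>
    rw [reachW, if_neg hsT]
    linarith [preSS_nonneg (s := s) hG (hγ s).1 hy.1 fun t => valReachUnder_nonneg hG h₁ (T := T) t]
  | succ n =>
    rw [reachW_succ, if_neg hsT, ← preSS_const hG (hγ s) hy ε, ← preSS_add]
    have hfirst : playThen s y (fun t => (σ t).1) [] s = y := if_pos rfl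
    rw [ml, hfirst]
    refine preSS_mono hG (hγ s).1 hy.1 fun t => ?_
    rw [List.nil_append, reachW_playThen γ s n [] t]
    exact (reachW_le_prReach hG h₁ (σ t).2 n t).trans (hσ t).le

end SubFixpoint

section Pre

variable {v : S → ℝ} {s : S} {x : M → ℝ}

lemma pre1Sel_le_preSS (hG : G.IsGame) (hv : ∀ t, 0 ≤ v t) (hx : ∀ a, 0 ≤ x a) {y : M → ℝ}
    (hy : IsDistOn (G.Γ₂ s) y) : pre1Sel G v s x ≤ preSS G v s x y :=
  ciInf_le (f := fun y : {y // IsDistOn (G.Γ₂ s) y} => preSS G v s x y.1)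
    ⟨0, Set.forall_mem_range.2 fun y => preSS_nonneg hG hx y.2.1 hv⟩ ⟨y, hy⟩

lemma le_pre1Sel (hG : G.IsGame) {c : ℝ}
    (h : ∀ y, IsDistOn (G.Γ₂ s) y → c ≤ preSS G v s x y) : c ≤ pre1Sel G v s x :=
  have := nonempty_isDistOn (hG.2.1 s)
  le_ciInf fun y => h y.1 y.2

lemma pre1Sel_le_pre1 (hG : G.IsGame) (hv₀ : ∀ t, 0 ≤ v t) (hv₁ : ∀ t, v t ≤ 1)
    (hx : IsDistOn (G.Γ₁ s) x) : pre1Sel G v s x ≤ pre1 G v s := by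
  have y := (nonempty_isDistOn (hG.2.1 s)).some
  refine le_ciSup (f := fun x : {x // IsDistOn (G.Γ₁ s) x} => pre1Sel G v s x.1)
    ⟨1, Set.forall_mem_range.2 fun x => ?_⟩ ⟨x, hx⟩
  exact (pre1Sel_le_preSS hG hv₀ x.2.1 y.2).trans (preSS_le_const hG x.2 y.2 hv₁)

lemma pre1_le_one (hG : G.IsGame) (hv₀ : ∀ t, 0 ≤ v t) (hv₁ : ∀ t, v t ≤ 1) (s : S) :
    pre1 G v s ≤ 1 :=
  have := nonempty_isDistOn (hG.1 s)
  have y := (nonempty_isDistOn (hG.2.1 s)).some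
  ciSup_le fun x => (pre1Sel_le_preSS hG hv₀ x.2.1 y.2).trans (preSS_le_const hG x.2 y.2 hv₁)

lemma pre1_absorbing (hG : G.IsGame) (habs : Absorbing G s) (v : S → ℝ) : pre1 G v s = v s := by
  have := nonempty_isDistOn (hG.1 s)
  have := nonempty_isDistOn (hG.2.1 s)
  simp only [pre1, pre1Sel, fun x : {x // IsDistOn (G.Γ₁ s) x} =>
    fun y : {y // IsDistOn (G.Γ₂ s) y} => preSS_absorbing hG habs x.2 y.2 v, ciInf_const,
    ciSup_const]

lemma le_pre1_of_le_preSS (hG : G.IsGame) (hv₀ : ∀ t, 0 ≤ v t) (hv₁ : ∀ t, v t ≤ 1)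
    (hx : IsDistOn (G.Γ₁ s) x) (h : ∀ y, IsDistOn (G.Γ₂ s) y → v s ≤ preSS G v s x y) :
    v s ≤ pre1 G v s :=
  (le_pre1Sel hG h).trans (pre1Sel_le_pre1 hG hv₀ hv₁ hx)

end Pre

section Safety

variable {σ₁ σ₂ : List S → S → M → ℝ} {T B : Set S}

lemma le_reachW_add_safeW (hG : G.IsGame) (h₁ : IsStrat1 G σ₁) (h₂ : IsStrat2 G σ₂)
    {u : S → ℝ} (hu₁ : ∀ t, u t ≤ 1) (huB : ∀ t ∈ B \ T, u t ≤ 0)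
    (hstep : ∀ w, ∀ t ∉ T ∪ B, u t ≤ preSS G u t (σ₁ w t) (σ₂ w t)) (n : ℕ) :
    ∀ w s, u s ≤ reachW G σ₁ σ₂ T n w s + safeW G σ₁ σ₂ (T ∪ B)ᶜ n w s := by
  induction n with
  | zero =>
    intro w s
    by_cases hT : s ∈ T
    · simp [reachW, safeW, hT, hu₁ s]
    by_cases hB : s ∈ B
    · simp [reachW, safeW, hT, hB, huB s ⟨hB, hT⟩]
    · simp [reachW, safeW, hT, hB, hu₁ s]
  | succ n ih =>
    intro w s
    by_cases hT : s ∈ T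
    · rw [reachW_succ, if_pos hT]
      linarith [hu₁ s, safeW_nonneg hG h₁ h₂ (T := (T ∪ B)ᶜ) (n + 1) w s]
    by_cases hB : s ∈ B
    · linarith [huB s ⟨hB, hT⟩, safeW_nonneg hG h₁ h₂ (T := (T ∪ B)ᶜ) (n + 1) w s,
        reachW_nonneg hG h₁ h₂ (T := T) (n + 1) w s]
    have hF : s ∉ T ∪ B := fun h => h.elim hT hB
    rw [reachW_succ, safeW_succ, if_neg hT, if_pos (Set.mem_compl hF), ← preSS_add]
    exact (hstep w s hF).trans (preSS_mono hG (h₁ w s).1 (h₂ w s).1 fun t => ih _ t)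

variable [DecidableEq M] {ξ : S → M → ℝ} {F : Set S}

/-- Backward induction for the largest probability with which player 2 can keep the play in `F`
for `n` rounds against the memoryless strategy `ξ`. -/
noncomputable def worstSafe (G : CGame S M) (ξ : S → M → ℝ) (F : Set S) : ℕ → S → ℝ
  | 0, s => if s ∈ F then 1 else 0
  | n + 1, s =>
    if s ∈ F then ⨆ b : G.Γ₂ s, preSS G (worstSafe G ξ F n) s (ξ s) (pureDist b) else 0

lemma worstSafe_nonneg (hG : G.IsGame) (hξ : IsSel1 G ξ) (n : ℕ) :
    ∀ s, 0 ≤ worstSafe G ξ F n s := by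
  induction n with
  | zero => intro s; rw [worstSafe]; split_ifs <;> norm_num
  | succ n ih =>
    intro s; rw [worstSafe]; split_ifs
    · exact Real.iSup_nonneg fun b => preSS_nonneg hG (hξ s).1 (isDistOn_pureDist b.2).1 ih
    · exact le_rfl

lemma worstSafe_succ_le {n : ℕ} {s : S} {c : ℝ} (hc : 0 ≤ c)
    (h : ∀ b ∈ G.Γ₂ s, preSS G (worstSafe G ξ F n) s (ξ s) (pureDist b) ≤ c) :
    worstSafe G ξ F (n + 1) s ≤ c := by
  rw [worstSafe]
  split_ifs
  · exact Real.iSup_le (fun b => h b b.2) hc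
  · exact hc

lemma preSS_pureDist_le_worstSafe {n : ℕ} {s : S} (hs : s ∈ F) {b : M} (hb : b ∈ G.Γ₂ s) :
    preSS G (worstSafe G ξ F n) s (ξ s) (pureDist b) ≤ worstSafe G ξ F (n + 1) s := by
  rw [worstSafe, if_pos hs]
  exact le_ciSup (f := fun b : G.Γ₂ s => preSS G (worstSafe G ξ F n) s (ξ s) (pureDist b))
    (Set.finite_range _).bddAbove ⟨b, hb⟩

lemma worstSafe_le_one (hG : G.IsGame) (hξ : IsSel1 G ξ) (n : ℕ) (s : S) :
    worstSafe G ξ F n s ≤ 1 := by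
  cases n with
  | zero => rw [worstSafe]; split_ifs <;> norm_num
  | succ n =>
    exact worstSafe_succ_le zero_le_one fun b hb =>
      preSS_le_const hG (hξ s) (isDistOn_pureDist hb) fun t => worstSafe_le_one hG hξ n t

lemma worstSafe_antitone (hG : G.IsGame) (hξ : IsSel1 G ξ) (s : S) :
    Antitone fun n => worstSafe G ξ F n s := by
  suffices h : ∀ n s, worstSafe G ξ F (n + 1) s ≤ worstSafe G ξ F n s from
    antitone_nat_of_succ_le fun n => h n s
  intro n
  induction n with
  | zero =>
    intro s
    by_cases hs : s ∈ F
    · simpa [worstSafe, hs] using worstSafe_le_one hG hξ (F := F) 1 s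
    · simp [worstSafe, hs]
  | succ n ih =>
    intro s
    by_cases hs : s ∈ F
    · refine worstSafe_succ_le (worstSafe_nonneg hG hξ _ s) fun b hb => ?_
      exact (preSS_mono hG (hξ s).1 (isDistOn_pureDist hb).1 ih).trans
        (preSS_pureDist_le_worstSafe hs hb)
    · simp [worstSafe, hs]

end Safety

section Closed

variable {ξ ζ : S → M → ℝ}

def IsClosedUnder (G : CGame S M) (ξ ζ : S → M → ℝ) (C : Set S) : Prop :=
  ∀ s ∈ C, ∀ b, ζ s b ≠ 0 → destSet G ξ s b ⊆ C

lemma exists_isClosedUnder_of_le_preSS (hG : G.IsGame) (hξ : IsSel1 G ξ) (hζ : IsSel2 G ζ)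
    {C : Set S} (hC : C.Nonempty) (hcl : IsClosedUnder G ξ ζ C) {f : S → ℝ}
    (hf : ∀ s ∈ C, f s ≤ preSS G f s (ξ s) (ζ s)) :
    ∃ D ⊆ C, D.Nonempty ∧ IsClosedUnder G ξ ζ D ∧
      ∀ s ∈ D, (∀ t ∈ C, f t ≤ f s) ∧ f s = preSS G f s (ξ s) (ζ s) := by
  obtain ⟨s₀, hs₀, hmax⟩ := C.exists_max_image f C.toFinite hC
  have hstep : ∀ s ∈ C, preSS G f s (ξ s) (ζ s) ≤ f s₀ ∧ (f s₀ ≤ preSS G f s (ξ s) (ζ s) →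
      ∀ b, ζ s b ≠ 0 → ∀ t ∈ destSet G ξ s b, f t = f s₀) := fun s hs =>
    preSS_le_of_destSet_le hG (hξ s) (hζ s) fun b hb t ht => hmax t (hcl s hs b hb ht)
  refine ⟨{s ∈ C | f s = f s₀}, fun s hs => hs.1, ⟨s₀, hs₀, rfl⟩,
    fun s hs b hb t ht => ⟨hcl s hs.1 b hb ht, ?_⟩,
    fun s hs => ⟨fun t ht => hs.2 ▸ hmax t ht, ?_⟩⟩
  · exact (hstep s hs.1).2 (hs.2 ▸ hf s hs.1) b hb t ht
  · exact le_antisymm (hf s hs.1) (hs.2 ▸ (hstep s hs.1).1)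

lemma reachW_eq_zero_of_isClosedUnder {C U : Set S} (hcl : IsClosedUnder G ξ ζ C)
    (hCU : C ⊆ Uᶜ) (n : ℕ) : ∀ w, ∀ s ∈ C, reachW G (ml ξ) (ml ζ) U n w s = 0 := by
  induction n with
  | zero => intro w s hs; rw [reachW, if_neg (hCU hs)]
  | succ n ih =>
    intro w s hs
    rw [reachW_succ, if_neg (hCU hs)]
    exact preSS_eq_zero_of_destSet fun b hb t ht => ih _ t (hcl s hs b hb ht)

lemma not_proper_of_isClosedUnder {T : Set S} (hζ : IsSel2 G ζ) {C : Set S} (hC : C.Nonempty)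
    (hCT : C ⊆ (T ∪ W2 G T)ᶜ) (hcl : IsClosedUnder G ξ ζ C) : ¬ Proper G T (ml ξ) := by
  intro hproper
  obtain ⟨s, hs⟩ := hC
  have h := hproper (ml ζ) (fun _ => hζ) s
  simp only [prReach, reachW_eq_zero_of_isClosedUnder hcl hCT _ [] s hs, ciSup_const] at h
  exact zero_ne_one h

end Closed

section Vanishing

variable [DecidableEq M] {ξ : S → M → ℝ} {F : Set S}

lemma safeW_le_worstSafe (hG : G.IsGame) (hξ : IsSel1 G ξ) {σ₂ : List S → S → M → ℝ}
    (h₂ : IsStrat2 G σ₂) (n : ℕ) : ∀ w s, safeW G (ml ξ) σ₂ F n w s ≤ worstSafe G ξ F n s := by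
  induction n with
  | zero => intro w s; simp only [safeW, worstSafe, le_refl]
  | succ n ih =>
    intro w s
    rw [safeW_succ]
    split_ifs with hs
    · exact (preSS_mono hG (hξ s).1 (h₂ w s).1 fun t => ih _ t).trans
        (preSS_le_of_pureDist_le (h₂ w s) fun b hb => preSS_pureDist_le_worstSafe hs hb)
    · exact worstSafe_nonneg hG hξ _ s

lemma tendsto_worstSafe (hG : G.IsGame) (hξ : IsSel1 G ξ) (s : S) :
    Tendsto (fun n => worstSafe G ξ F n s) atTop (𝓝 (⨅ n, worstSafe G ξ F n s)) :=
  tendsto_atTop_ciInf (worstSafe_antitone hG hξ s)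
    ⟨0, Set.forall_mem_range.2 fun n => worstSafe_nonneg hG hξ n s⟩

lemma exists_le_preSS_iInf_worstSafe (hG : G.IsGame) (hξ : IsSel1 G ξ) {s : S} (hs : s ∈ F) :
    ∃ b ∈ G.Γ₂ s, ⨅ n, worstSafe G ξ F n s ≤
      preSS G (fun t => ⨅ n, worstSafe G ξ F n t) s (ξ s) (pureDist b) := by
  by_contra! h
  have hlim := tendsto_pi_nhds.2 fun t => tendsto_worstSafe (F := F) hG hξ t
  have hev : ∀ b : G.Γ₂ s, ∀ᶠ n in atTop,
      preSS G (worstSafe G ξ F n) s (ξ s) (pureDist b) < ⨅ n, worstSafe G ξ F n s :=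
    fun b => ((continuous_preSS.tendsto _).comp hlim).eventually_lt_const (h b b.2)
  obtain ⟨n, hn⟩ := (eventually_all.2 hev).exists
  have := (hG.2.1 s).to_subtype
  obtain ⟨b, hb⟩ := exists_eq_ciSup_of_finite
    (f := fun b : G.Γ₂ s => preSS G (worstSafe G ξ F n) s (ξ s) (pureDist b))
  have hlt : worstSafe G ξ F (n + 1) s < ⨅ n, worstSafe G ξ F n s := by
    rw [worstSafe, if_pos hs, ← hb]
    exact hn b
  exact hlt.not_ge (ciInf_le ⟨0, Set.forall_mem_range.2 fun n => worstSafe_nonneg hG hξ n s⟩ _)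

lemma tendsto_worstSafe_zero (hG : G.IsGame) (hξ : IsSel1 G ξ) (habs : ∀ s ∉ F, Absorbing G s)
    (hF : ∀ ζ, IsSel2 G ζ → ∀ C ⊆ F, C.Nonempty → ¬ IsClosedUnder G ξ ζ C) (s : S) :
    Tendsto (fun n => worstSafe G ξ F n s) atTop (𝓝 0) := by
  set z := fun t => ⨅ n, worstSafe G ξ F n t
  have hz₀ : ∀ t, 0 ≤ z t := fun t => le_ciInf fun n => worstSafe_nonneg hG hξ n t
  have hzF : ∀ t ∉ F, z t ≤ 0 := fun t ht =>
    (ciInf_le ⟨0, Set.forall_mem_range.2 fun n => worstSafe_nonneg hG hξ n t⟩ 0).trans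
      (by simp [worstSafe, ht])
  have hmove : ∀ t, ∃ b ∈ G.Γ₂ t, t ∈ F → z t ≤ preSS G z t (ξ t) (pureDist b) := fun t => by
    by_cases ht : t ∈ F
    · obtain ⟨b, hb, h⟩ := exists_le_preSS_iInf_worstSafe hG hξ ht
      exact ⟨b, hb, fun _ => h⟩
    · obtain ⟨b, hb⟩ := hG.2.1 t
      exact ⟨b, hb, fun h => absurd h ht⟩
  choose b hbΓ hbz using hmove
  have hζ : IsSel2 G fun t => pureDist (b t) := fun t => isDistOn_pureDist (hbΓ t)
  have hsub : ∀ t ∈ Set.univ, z t ≤ preSS G z t (ξ t) (pureDist (b t)) := fun t _ => by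
    by_cases ht : t ∈ F
    · exact hbz t ht
    · rw [preSS_absorbing hG (habs t ht) (hξ t) (hζ t)]
  obtain ⟨D, -, hD, hcl, hmax⟩ := exists_isClosedUnder_of_le_preSS hG hξ hζ
    (Set.nonempty_of_mem (Set.mem_univ s)) (fun _ _ _ _ _ _ => trivial) hsub
  -- the maximisers of `z` would lie in `F` if `z` were positive somewhere
  have hzero : ∀ t, z t = 0 := by
    by_contra! h
    obtain ⟨t, ht⟩ := h
    refine hF _ hζ D (fun d hd => ?_) hD hcl
    by_contra hdF
    linarith [(hmax d hd).1 t trivial, hzF d hdF, hz₀ t, lt_of_le_of_ne (hz₀ t) ht.symm]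
  convert tendsto_worstSafe (F := F) hG hξ s
  exact (hzero s).symm

lemma le_valReachUnder_of_tendsto_worstSafe (hG : G.IsGame) (hξ : IsSel1 G ξ) {T B : Set S}
    {u : S → ℝ} (hu₁ : ∀ t, u t ≤ 1) (huB : ∀ t ∈ B \ T, u t ≤ 0)
    (hstep : ∀ t ∉ T ∪ B, ∀ y, IsDistOn (G.Γ₂ t) y → u t ≤ preSS G u t (ξ t) y)
    (hsafe : ∀ t, Tendsto (fun n => worstSafe G ξ (T ∪ B)ᶜ n t) atTop (𝓝 0)) (s : S) :
    u s ≤ valReachUnder G (ml ξ) T s := by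
  have := nonempty_isStrat2 hG
  have h₁ : IsStrat1 G (ml ξ) := fun _ => hξ
  refine le_ciInf fun σ₂ => le_of_forall_pos_lt_add fun θ hθ => ?_
  obtain ⟨n, hn⟩ := ((hsafe s).eventually_lt_const hθ).exists
  calc u s ≤ reachW G (ml ξ) σ₂.1 T n [] s + safeW G (ml ξ) σ₂.1 (T ∪ B)ᶜ n [] s :=
        le_reachW_add_safeW hG h₁ σ₂.2 hu₁ huB (fun w t ht => hstep t ht _ (σ₂.2 w t)) n [] s
    _ < prReach G (ml ξ) σ₂.1 T s + θ :=
        add_lt_add_of_le_of_lt (reachW_le_prReach hG h₁ σ₂.2 n s)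
          ((safeW_le_worstSafe hG hξ σ₂.2 n [] s).trans_lt hn)

end Vanishing

section Improvement

lemma not_isClosedUnder_of_improvement (hG : G.IsGame) {T : Set S} {γ γ' : S → M → ℝ}
    (hγ' : IsSel1 G γ') (hproper : Proper G T (ml γ)) {v : S → ℝ} {I : Set S}
    (hv : ∀ s y, IsDistOn (G.Γ₂ s) y → v s ≤ preSS G v s (γ' s) y)
    (hvI : ∀ s ∈ I, ∀ y, IsDistOn (G.Γ₂ s) y → v s < preSS G v s (γ' s) y)
    (hagree : ∀ s ∉ I, γ' s = γ s) {ζ : S → M → ℝ} (hζ : IsSel2 G ζ) {C : Set S}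
    (hCT : C ⊆ (T ∪ W2 G T)ᶜ) (hC : C.Nonempty) : ¬ IsClosedUnder G γ' ζ C := by
  intro hcl
  obtain ⟨D, hDC, hD, hDcl, hDv⟩ :=
    exists_isClosedUnder_of_le_preSS hG hγ' hζ hC hcl fun s _ => hv s (ζ s) (hζ s)
  have hDI : ∀ s ∈ D, s ∉ I := fun s hs hsI => (hvI s hsI (ζ s) (hζ s)).ne (hDv s hs).2
  refine not_proper_of_isClosedUnder hζ hD (hDC.trans hCT) (fun s hs b hb t ⟨a, ha, hδ⟩ => ?_)
    hproper
  exact hDcl s hs b hb ⟨a, by rwa [hagree s (hDI s hs)], hδ⟩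

lemma pre1_le_valReachUnder_of_improvement [DecidableEq M] (hG : G.IsGame) {T : Set S}
    (habs : ∀ s ∈ T ∪ W2 G T, Absorbing G s) {γ γ' : S → M → ℝ} (hγ : IsSel1 G γ)
    (hγ' : IsSel1 G γ') (hproper : Proper G T (ml γ)) {v : S → ℝ} (hv₀ : ∀ s, 0 ≤ v s)
    (hv₁ : ∀ s, v s ≤ 1) (hvW2 : ∀ s ∈ W2 G T, v s = 0)
    (hsub : ∀ s y, IsDistOn (G.Γ₂ s) y → v s ≤ preSS G v s (γ s) y) {I : Set S}
    (hI : ∀ s, s ∈ I ↔ s ∉ T ∪ W2 G T ∧ v s < pre1 G v s) (hagree : ∀ s ∉ I, γ' s = γ s)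
    (himp : ∀ s ∈ I, pre1Sel G v s (γ' s) = pre1 G v s) (s : S) :
    pre1 G v s ≤ valReachUnder G (ml γ') T s := by
  have hle : ∀ s, v s ≤ pre1 G v s := fun s => le_pre1_of_le_preSS hG hv₀ hv₁ (hγ s) (hsub s)
  have hstep : ∀ s ∉ T ∪ W2 G T, ∀ y, IsDistOn (G.Γ₂ s) y →
      pre1 G v s ≤ preSS G v s (γ' s) y := fun s hs y hy => by
    by_cases hsI : s ∈ I
    · exact (himp s hsI).symm.le.trans (pre1Sel_le_preSS hG hv₀ (hγ' s).1 hy)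
    · rw [hagree s hsI]
      exact (not_lt.1 fun h => hsI ((hI s).2 ⟨hs, h⟩)).trans (hsub s y hy)
  have hvI : ∀ s ∈ I, ∀ y, IsDistOn (G.Γ₂ s) y → v s < preSS G v s (γ' s) y :=
    fun s hs y hy => ((hI s).1 hs).2.trans_le (hstep s ((hI s).1 hs).1 y hy)
  have hsub' : ∀ s y, IsDistOn (G.Γ₂ s) y → v s ≤ preSS G v s (γ' s) y := fun s y hy => by
    by_cases hsI : s ∈ I
    · exact (hvI s hsI y hy).le
    · exact hagree s hsI ▸ hsub s y hy
  refine le_valReachUnder_of_tendsto_worstSafe hG hγ' (pre1_le_one hG hv₀ hv₁)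
    (fun s hs => by rw [pre1_absorbing hG (habs s (Or.inr hs.1)), hvW2 s hs.1])
    (fun s hs y hy => (hstep s hs y hy).trans (preSS_mono hG (hγ' s).1 hy.1 hle))
    (tendsto_worstSafe_zero hG hγ' (fun s hs => habs s (not_not.1 hs)) ?_) s
  exact fun _ hζ _ hCT hC =>
    not_isClosedUnder_of_improvement hG hγ' hproper hsub' hvI hagree hζ hCT hC

end Improvement

end CGame

theorem improvement_step_improves_value_reach_general
    {S M : Type} [Fintype S] [Fintype M] [DecidableEq M]
    (G : CGame S M) (hG : G.IsGame) (T : Set S)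
    (habs : ∀ s ∈ T ∪ CGame.W2 G T, CGame.Absorbing G s)
    (γ γ' : S → M → ℝ) (hγ : CGame.IsSel1 G γ) (hγ' : CGame.IsSel1 G γ')
    (hproper : CGame.Proper G T (CGame.ml γ))
    (v : S → ℝ) (hv : v = CGame.valReachUnder G (CGame.ml γ) T)
    (I : Set S)
    (hI : I = {s | s ∉ T ∪ CGame.W2 G T ∧ v s < CGame.pre1 G v s})
    (hagree : ∀ s ∉ I, γ' s = γ s)
    (himp : ∀ s ∈ I, CGame.pre1Sel G v s (γ' s) = CGame.pre1 G v s)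
    (v' : S → ℝ) (hv' : v' = CGame.valReachUnder G (CGame.ml γ') T) :
    (∀ s, CGame.pre1 G v s ≤ v' s) ∧ (∀ s, v s ≤ v' s) ∧ ∀ s ∈ I, v s < v' s := by
  have h₁ : CGame.IsStrat1 G (CGame.ml γ) := fun _ => hγ
  have hv₀ : ∀ s, 0 ≤ v s := hv ▸ CGame.valReachUnder_nonneg hG h₁
  have hv₁ : ∀ s, v s ≤ 1 := hv ▸ CGame.valReachUnder_le_one hG h₁
  have hsub : ∀ s y, CGame.IsDistOn (G.Γ₂ s) y → v s ≤ CGame.preSS G v s (γ s) y :=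
    fun s y hy => hv ▸ CGame.valReachUnder_le_preSS hG hγ (fun t ht => habs t (Or.inl ht)) hy
  have hmemI : ∀ s, s ∈ I ↔ s ∉ T ∪ CGame.W2 G T ∧ v s < CGame.pre1 G v s := by
    simp [hI]
  have hkey : ∀ s, CGame.pre1 G v s ≤ v' s := hv' ▸
    CGame.pre1_le_valReachUnder_of_improvement hG habs hγ hγ' hproper hv₀ hv₁
      (fun s hs => hv ▸ CGame.valReachUnder_eq_zero_of_mem_W2 hG h₁ hs) hsub hmemI hagree himp
  refine ⟨hkey, fun s => ?_, fun s hs => ((hmemI s).1 hs).2.trans_le (hkey s)⟩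
  exact (CGame.le_pre1_of_le_preSS hG hv₀ hv₁ (hγ s) (hsub s)).trans (hkey s)

/-- **The strategy-improvement step improves the value (reachability).**
Let `γ` be a proper player-1 selector with value `v = ⟨1⟩val^{ml γ}(Reach T)`, let
`I = {s ∉ T ∪ W₂ | Pre₁(v)(s) > v(s)}`, and let `γ'` agree with `γ` outside `I`
and satisfy `Pre_{1:γ'}(v)(s) = Pre₁(v)(s) > v(s)` on `I`. Then the new value
`v' = ⟨1⟩val^{ml γ'}(Reach T)` satisfies `v' ≥ Pre₁(v)` pointwise; consequently
`v' ≥ v` pointwise, and `v'(s) > v(s)` for all `s ∈ I`. -/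
theorem improvement_step_improves_value_reach
    {S M : Type} [Fintype S] [DecidableEq S] [Fintype M] [DecidableEq M]
    (G : CGame S M) (hG : G.IsGame) (T : Set S)
    (habs : ∀ s ∈ T ∪ CGame.W2 G T, CGame.Absorbing G s)
    (γ γ' : S → M → ℝ) (hγ : CGame.IsSel1 G γ) (hγ' : CGame.IsSel1 G γ')
    (hproper : CGame.Proper G T (CGame.ml γ))
    (v : S → ℝ) (hv : v = CGame.valReachUnder G (CGame.ml γ) T)
    (I : Set S)
    (hI : I = {s | s ∉ T ∪ CGame.W2 G T ∧ v s < CGame.pre1 G v s})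
    (hagree : ∀ s ∉ I, γ' s = γ s)
    (himp : ∀ s ∈ I, CGame.pre1Sel G v s (γ' s) = CGame.pre1 G v s)
    (v' : S → ℝ) (hv' : v' = CGame.valReachUnder G (CGame.ml γ') T) :
    (∀ s, CGame.pre1 G v s ≤ v' s) ∧ (∀ s, v s ≤ v' s) ∧ ∀ s ∈ I, v s < v' s :=
  improvement_step_improves_value_reach_general G hG T habs γ γ' hγ hγ' hproper v hv I hI hagree
    himp v' hv'
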